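/- With binary weights, the equilibrium distribution equals the decomposable distribution that is leximin-maximal over agents' utilities: among all decomposable distributions, it lexicographically maximizes the sorted vector of Leontief utilities (u_i(δ))_{i∈N}. -/

import Mathlib

/-!
Suppose a decomposable `δ` beat the equilibrium `δ⋆` in the leximin order, and let `w` be the
least equilibrium utility level at which the utilities `u` of `δ` and `u⋆` of `δ⋆` part ways.
Below `w` the two utility vectors agree, and comparing the numbers of agents below `w` shows that
no agent at level `w` is worse off under `δ`. Now let `T` be the charities critical, under `δ⋆`,
for the agents of utility at most `w`. In equilibrium these agents spend all their money on `T`,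
while under `δ` only they can fund `T`; hence `δ(T) ≤ δ⋆(T)`. But `δ ≥ δ⋆` pointwise on `T`, so
`δ = δ⋆` on `T`, and every agent at level `w` keeps utility exactly `w` — a contradiction.
-/

open Finset

/-- The multiset of values of a finitely indexed vector, sorted in increasing order. -/
noncomputable def sortedVec {I : Type*} [Fintype I] (f : I → ℝ) : List ℝ :=
  Multiset.sort (Finset.univ.val.map f) (· ≤ ·)

section Leximin

theorem List.exists_threshold_of_lex_lt {α : Type*} [LinearOrder α] {l₁ l₂ : List α}
    (h₁ : l₁.Pairwise (· ≤ ·)) (h₂ : l₂.Pairwise (· ≤ ·)) (h : List.Lex (· < ·) l₁ l₂)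
    (hlen : l₁.length = l₂.length) :
    ∃ s, (∀ t ≤ s, l₂.countP (· < t) = l₁.countP (· < t)) ∧
      l₂.countP (· ≤ s) < l₁.countP (· ≤ s) := by
  induction h with
  | nil => simp at hlen
  | @cons a as bs _ ih =>
    obtain ⟨s, hlt, hle⟩ := ih (List.pairwise_cons.mp h₁).2 (List.pairwise_cons.mp h₂).2
      (by simpa using hlen)
    refine ⟨s, fun t ht => ?_, ?_⟩
    · simp only [List.countP_cons, hlt t ht]
    · simp only [List.countP_cons]
      omega
  | @rel a as b bs hab =>
    have ha : ∀ y ∈ as, a ≤ y := (List.pairwise_cons.mp h₁).1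
    have hb : ∀ y ∈ bs, b ≤ y := (List.pairwise_cons.mp h₂).1
    refine ⟨a, fun t ht => ?_, ?_⟩
    · rw [List.countP_eq_zero.mpr, List.countP_eq_zero.mpr]
      · simpa using ⟨ht, fun y hy => ht.trans (ha y hy)⟩
      · simpa using ⟨ht.trans hab.le, fun y hy => (ht.trans hab.le).trans (hb y hy)⟩
    · rw [List.countP_eq_zero.mpr]
      · simp
      · simpa using ⟨hab, fun y hy => hab.trans_le (hb y hy)⟩

variable {I : Type*} [Fintype I]

theorem card_filter_eq_countP_sortedVec (f : I → ℝ) (p : ℝ → Prop) [DecidablePred p] :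
    #{i | p (f i)} = (sortedVec f).countP (fun y => decide (p y)) := by
  rw [← Multiset.coe_countP, sortedVec, Multiset.sort_eq, Multiset.countP_map]
  rfl

theorem length_sortedVec (f : I → ℝ) : (sortedVec f).length = Fintype.card I := by
  rw [sortedVec, Multiset.length_sort, Multiset.card_map]
  rfl

theorem pairwise_sortedVec (f : I → ℝ) : (sortedVec f).Pairwise (· ≤ ·) :=
  Multiset.pairwise_sort _ _

theorem exists_threshold_of_sortedVec_lt {f g : I → ℝ}
    (h : List.Lex (· < ·) (sortedVec f) (sortedVec g)) :
    ∃ s, (∀ t ≤ s, #{i | g i < t} = #{i | f i < t}) ∧ #{i | g i ≤ s} < #{i | f i ≤ s} := by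
  obtain ⟨s, hlt, hle⟩ := List.exists_threshold_of_lex_lt (pairwise_sortedVec f)
    (pairwise_sortedVec g) h (by rw [length_sortedVec, length_sortedVec])
  refine ⟨s, fun t ht => ?_, ?_⟩
  · rw [card_filter_eq_countP_sortedVec g (· < t), card_filter_eq_countP_sortedVec f (· < t)]
    exact hlt t ht
  · rw [card_filter_eq_countP_sortedVec g (· ≤ s), card_filter_eq_countP_sortedVec f (· ≤ s)]
    exact hle

theorem not_sortedVec_lt_of_levelwise {f g : I → ℝ}
    (hlevel : ∀ w, (∀ k, f k < w → g k = f k) → (∀ k, f k = w → w ≤ g k) →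
      ∀ j, f j = w → g j ≤ w) :
    ¬ List.Lex (· < ·) (sortedVec f) (sortedVec g) := by
  classical
  intro h
  obtain ⟨s, hlt, hle⟩ := exists_threshold_of_sortedVec_lt h
  have hbad : ({j | f j ≤ s ∧ g j ≠ f j} : Finset I).Nonempty := by
    by_contra hnone
    refine hle.not_ge (card_le_card fun j hj => ?_)
    simp only [not_nonempty_iff_eq_empty, filter_eq_empty_iff, mem_univ, true_implies,
      not_and, not_not] at hnone
    simp only [mem_filter, mem_univ, true_and] at hj ⊢
    rwa [hnone hj]
  obtain ⟨j, hj, hmin⟩ := exists_min_image _ f hbad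
  simp only [mem_filter, mem_univ, true_and] at hj hmin
  have below : ∀ k, f k < f j → g k = f k := fun k hk => by
    by_contra hne
    exact (hmin k ⟨hk.le.trans hj.1, hne⟩).not_gt hk
  have hsame : univ.filter (fun k => f k < f j) = univ.filter fun k => g k < f j :=
    eq_of_subset_of_card_le
      (fun k hk => by simp only [mem_filter, mem_univ, true_and] at hk ⊢; rwa [below k hk])
      (hlt _ hj.1).le
  have at_level : ∀ k, f k = f j → f j ≤ g k := fun k hk => by
    have : k ∉ univ.filter fun k => g k < f j := by rw [← hsame]; simp [hk]
    simpa using this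
  exact hj.2 (le_antisymm (hlevel _ below at_level j rfl) (at_level j rfl))

end Leximin

section Donations

variable {N A : Type*} [Fintype N] [Fintype A]

/-- `τ i x` is the part of agent `i`'s contribution `C i` that goes to charity `x`. -/
structure IsDecomposition (C : N → ℝ) (Ai : N → Finset A) (δ : A → ℝ) (τ : N → A → ℝ) :
    Prop where
  nonneg : ∀ i x, 0 ≤ τ i x
  sum_agents : ∀ x, ∑ i, τ i x = δ x
  sum_charities : ∀ i, ∑ x, τ i x = C i
  support : ∀ i x, x ∉ Ai i → τ i x = 0

variable {C : N → ℝ} {Ai : N → Finset A} {δ : A → ℝ} {τ : N → A → ℝ}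

theorem IsDecomposition.sum_le_sum_contrib (hτ : IsDecomposition C Ai δ τ) (T : Finset A)
    (U : Finset N) (hU : ∀ i ∉ U, ∀ x ∈ T, x ∉ Ai i) : ∑ x ∈ T, δ x ≤ ∑ i ∈ U, C i := calc
  ∑ x ∈ T, δ x = ∑ i ∈ U, ∑ x ∈ T, τ i x := by
    simp_rw [← hτ.sum_agents]
    rw [sum_comm, sum_subset (subset_univ U)]
    exact fun i _ hi => sum_eq_zero fun x hx => hτ.support i x (hU i hi x hx)
  _ ≤ ∑ i ∈ U, C i := Finset.sum_le_sum fun i _ => hτ.sum_charities i ▸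
    sum_le_sum_of_subset_of_nonneg (subset_univ T) fun x _ _ => hτ.nonneg i x

theorem IsDecomposition.sum_contrib_le_sum (hτ : IsDecomposition C Ai δ τ) (T : Finset A)
    (U : Finset N) (hU : ∀ i ∈ U, ∀ x ∉ T, τ i x = 0) : ∑ i ∈ U, C i ≤ ∑ x ∈ T, δ x := calc
  ∑ i ∈ U, C i = ∑ i ∈ U, ∑ x ∈ T, τ i x := sum_congr rfl fun i hi => by
    rw [← hτ.sum_charities, sum_subset (subset_univ T) fun x _ hx => hU i hi x hx]
  _ ≤ ∑ x ∈ T, δ x := by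
    simp_rw [← hτ.sum_agents]
    rw [sum_comm (s := T)]
    exact sum_le_sum_of_subset_of_nonneg (subset_univ U) fun i _ _ =>
      sum_nonneg fun x _ => hτ.nonneg i x

theorem equilibrium_levelwise (hAi : ∀ i, (Ai i).Nonempty) {δstar : A → ℝ} {σ : N → A → ℝ}
    (hσ : IsDecomposition C Ai δstar σ)
    (hcrit : ∀ i x, δstar x ≠ (Ai i).inf' (hAi i) δstar → σ i x = 0)
    (hτ : IsDecomposition C Ai δ τ) (w : ℝ)
    (below : ∀ k, (Ai k).inf' (hAi k) δstar < w →
      (Ai k).inf' (hAi k) δ = (Ai k).inf' (hAi k) δstar)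
    (at_level : ∀ k, (Ai k).inf' (hAi k) δstar = w → w ≤ (Ai k).inf' (hAi k) δ)
    (j : N) (hj : (Ai j).inf' (hAi j) δstar = w) : (Ai j).inf' (hAi j) δ ≤ w := by
  classical
  set ustar : N → ℝ := fun i => (Ai i).inf' (hAi i) δstar
  set T : Finset A := {x | ∃ i, ustar i ≤ w ∧ x ∈ Ai i ∧ δstar x = ustar i}
  have hgain : ∀ i, ustar i ≤ w → ustar i ≤ (Ai i).inf' (hAi i) δ := fun i hi => by
    rcases hi.lt_or_eq with hi | hi
    · exact (below i hi).ge
    · exact hi ▸ at_level i hi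
  have hle : ∀ x ∈ T, δstar x ≤ δ x := fun x hx => by
    obtain ⟨i, hiw, hxi, hx⟩ := (mem_filter.mp hx).2
    exact hx ▸ (hgain i hiw).trans (inf'_le _ hxi)
  have hsum : ∑ x ∈ T, δ x ≤ ∑ x ∈ T, δstar x := by
    refine (hτ.sum_le_sum_contrib T {i | ustar i ≤ w} ?_).trans
      (hσ.sum_contrib_le_sum T {i | ustar i ≤ w} ?_)
    · intro i hi x hx hxi
      obtain ⟨k, hkw, -, hx⟩ := (mem_filter.mp hx).2
      exact (mem_filter.not.mp hi) ⟨mem_univ i, ((inf'_le _ hxi).trans hx.le).trans hkw⟩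
    · intro i hi x hx
      by_cases hxi : x ∈ Ai i
      · exact hcrit i x fun hcr =>
          hx (mem_filter.mpr ⟨mem_univ x, i, (mem_filter.mp hi).2, hxi, hcr⟩)
      · exact hσ.support i x hxi
  have heq : ∀ x ∈ T, δstar x = δ x :=
    (sum_eq_sum_iff_of_le hle).mp (le_antisymm (sum_le_sum hle) hsum)
  obtain ⟨x, hxj, hx⟩ := exists_mem_eq_inf' (hAi j) δstar
  calc (Ai j).inf' (hAi j) δ ≤ δ x := inf'_le _ hxj
    _ = w := by rw [← heq x (mem_filter.mpr ⟨mem_univ x, j, hj.le, hxj, hx.symm⟩), ← hx, hj]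

end Donations

theorem stmt_16_general {N A : Type*} [Fintype N] [Fintype A]
    (C : N → ℝ)
    (Ai : N → Finset A) (hAi : ∀ i, (Ai i).Nonempty)
    (δstar : A → ℝ)
    -- δstar is the equilibrium distribution:
    (heq : ∃ δi : N → A → ℝ, (∀ i x, 0 ≤ δi i x) ∧ (∀ x, ∑ i, δi i x = δstar x) ∧
        (∀ i, ∑ x, δi i x = C i) ∧
        (∀ i x, x ∉ Ai i → δi i x = 0) ∧
        (∀ i x, δstar x ≠ (Ai i).inf' (hAi i) δstar → δi i x = 0)) :
    -- δstar is leximin-maximal over agents' utilities among decomposable distributions: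
    ∀ δ : A → ℝ, (∀ x, 0 ≤ δ x) → (∑ x, δ x = ∑ i, C i) →
      (∃ δi : N → A → ℝ, (∀ i x, 0 ≤ δi i x) ∧ (∀ x, ∑ i, δi i x = δ x) ∧
          (∀ i, ∑ x, δi i x = C i) ∧ (∀ i x, x ∉ Ai i → δi i x = 0)) →
      sortedVec (fun i => (Ai i).inf' (hAi i) δ) =
          sortedVec (fun i => (Ai i).inf' (hAi i) δstar) ∨
        List.Lex (· < ·) (sortedVec fun i => (Ai i).inf' (hAi i) δ)
          (sortedVec fun i => (Ai i).inf' (hAi i) δstar) := by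
  rintro δ - - ⟨τ, hτ0, hτsum, hτC, hτsupp⟩
  obtain ⟨σ, hσ0, hσsum, hσC, hσsupp, hσcrit⟩ := heq
  have hnot := not_sortedVec_lt_of_levelwise
    (equilibrium_levelwise hAi ⟨hσ0, hσsum, hσC, hσsupp⟩ hσcrit ⟨hτ0, hτsum, hτC, hτsupp⟩)
  exact (List.le_iff_lt_or_eq.mp hnot).symm

theorem stmt_16 {N A : Type*} [Fintype N] [Fintype A] [DecidableEq A]
    (C : N → ℝ) (hC : ∀ i, 0 ≤ C i)
    (Ai : N → Finset A) (hAi : ∀ i, (Ai i).Nonempty)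
    (δstar : A → ℝ) (hδs : ∀ x, 0 ≤ δstar x) (hsum : ∑ x, δstar x = ∑ i, C i)
    -- δstar is the equilibrium distribution:
    (heq : ∃ δi : N → A → ℝ, (∀ i x, 0 ≤ δi i x) ∧ (∀ x, ∑ i, δi i x = δstar x) ∧
        (∀ i, ∑ x, δi i x = C i) ∧
        (∀ i x, x ∉ Ai i → δi i x = 0) ∧
        (∀ i x, δstar x ≠ (Ai i).inf' (hAi i) δstar → δi i x = 0)) :
    -- δstar is leximin-maximal over agents' utilities among decomposable distributions:
    ∀ δ : A → ℝ, (∀ x, 0 ≤ δ x) → (∑ x, δ x = ∑ i, C i) →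
      (∃ δi : N → A → ℝ, (∀ i x, 0 ≤ δi i x) ∧ (∀ x, ∑ i, δi i x = δ x) ∧
          (∀ i, ∑ x, δi i x = C i) ∧ (∀ i x, x ∉ Ai i → δi i x = 0)) →
      sortedVec (fun i => (Ai i).inf' (hAi i) δ) =
          sortedVec (fun i => (Ai i).inf' (hAi i) δstar) ∨
        List.Lex (· < ·) (sortedVec fun i => (Ai i).inf' (hAi i) δ)
          (sortedVec fun i => (Ai i).inf' (hAi i) δstar) :=
  stmt_16_general C Ai hAi δstar heq
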